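/- arXiv:1512.06529 — 2 statements merged into one kernel-verified Lean document; each statement's English description precedes it below -/
import Mathlib

section
/- Let Ω ⊆ ℝ^N be a bounded domain, K ∈ L^∞(Ω × Ω) a symmetric nonnegative kernel, a bounded continuous, and λ ∈ ℝ. If ψ ∈ C(Ω) ∩ L^∞(Ω), ψ ≥ 0, ψ ≢ 0 satisfies L_Ω ψ + (a + λ)ψ ≥ 0 in Ω, then λ_v(L_Ω + a) ≤ λ, where λ_v(L_Ω + a) = inf over nonzero φ ∈ L²(Ω) of ( −∬_{Ω×Ω} K(x,y)φ(x)φ(y) dxdy − ∫_Ω a φ² ) / ‖φ‖²_{L²}. Consequently λ_v(L_Ω + a) ≤ λ_p'(L_Ω + a). -/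
open MeasureTheory Filter Metric Set
open scoped Topology

noncomputable section

/-- The set of Rayleigh-type quotients defining the variational eigenvalue
`λ_v(L_Ω + a)`: values `(−∬ K φ φ − ∫ a φ²)/‖φ‖²_{L²}` over nonzero `φ ∈ L²(Ω)`. -/
def lamVSet (N : ℕ) (Ω : Set (EuclideanSpace ℝ (Fin N)))
    (K : EuclideanSpace ℝ (Fin N) → EuclideanSpace ℝ (Fin N) → ℝ)
    (a : EuclideanSpace ℝ (Fin N) → ℝ) : Set ℝ :=
  {r | ∃ φ : EuclideanSpace ℝ (Fin N) → ℝ,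
    MemLp φ 2 (volume.restrict Ω) ∧ (∫ x in Ω, (φ x) ^ 2) ≠ 0 ∧
    r = (-(∫ x in Ω, ∫ y in Ω, K x y * φ x * φ y) - ∫ x in Ω, a x * (φ x) ^ 2) /
        (∫ x in Ω, (φ x) ^ 2)}

/-!
Multiplying `L_Ω ψ + (a + λ) ψ ≥ 0` by `ψ ≥ 0` and integrating over `Ω` shows that the Rayleigh
quotient of `ψ` is at most `λ`; `ψ` is an admissible competitor since it is bounded on a set of
finite measure and, being continuous and positive somewhere in the open set `Ω`, has `∫ ψ² > 0`.
Because `sInf` of a set of reals that is not bounded below is `0`, one also needs a lower bound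
on all Rayleigh quotients: from `K φ(x) φ(y) ≤ ‖K‖_∞ (φ(x)² + φ(y)²) / 2` they are all at least
`-(‖K‖_∞ |Ω| + ‖a‖_∞)`.
-/

theorem mul_mul_le_of_abs_le {k M : ℝ} (hk : |k| ≤ M) (s t : ℝ) :
    k * s * t ≤ M / 2 * (s ^ 2 + t ^ 2) := by
  have hM : 0 ≤ M := (abs_nonneg k).trans hk
  calc k * s * t ≤ |k| * (|s| * |t|) := by
        rw [← abs_mul, ← abs_mul, ← mul_assoc]; exact le_abs_self _
    _ ≤ M * (|s| * |t|) := by gcongr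
    _ ≤ M / 2 * (s ^ 2 + t ^ 2) := by
        rw [← sq_abs s, ← sq_abs t]; nlinarith [sq_nonneg (|s| - |t|)]

theorem setIntegral_sq_pos_of_continuousOn {X : Type*} [TopologicalSpace X] [MeasurableSpace X]
    [OpensMeasurableSpace X] {μ : Measure X} [μ.IsOpenPosMeasure] {s : Set X} {f : X → ℝ}
    {x : X} (hs : IsOpen s) (hf : ContinuousOn f s) (hfi : IntegrableOn (fun x => f x ^ 2) s μ)
    (hx : x ∈ s) (hfx : f x ≠ 0) :
    0 < ∫ x in s, f x ^ 2 ∂μ := by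
  rw [setIntegral_pos_iff_support_of_nonneg_ae (ae_of_all _ fun _ => sq_nonneg _) hfi]
  have hopen : IsOpen (s ∩ (fun x => f x ^ 2) ⁻¹' {0}ᶜ) :=
    (hf.pow 2).isOpen_inter_preimage hs isOpen_compl_singleton
  exact (hopen.measure_pos μ ⟨x, hx, pow_ne_zero 2 hfx⟩).trans_le
    (measure_mono fun y hy => ⟨hy.2, hy.1⟩)

namespace KernelOperator

variable {α : Type*} [MeasurableSpace α] {μ : Measure α} {K : α → α → ℝ} {M : ℝ}
  {a : α → ℝ} {C : ℝ} {φ : α → ℝ}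

theorem integrable_kernel_mul (hK : Measurable fun p : α × α => K p.1 p.2)
    (hKM : ∀ x y, |K x y| ≤ M) (hφ : Integrable φ μ) (x : α) :
    Integrable (fun y => K x y * φ y) μ :=
  hφ.bdd_mul (hK.comp measurable_prodMk_left).aestronglyMeasurable
    (ae_of_all _ fun y => hKM x y)

theorem abs_integral_kernel_mul_le (hKM : ∀ x y, |K x y| ≤ M) (hφ : Integrable φ μ) (x : α) :
    |∫ y, K x y * φ y ∂μ| ≤ M * ∫ y, |φ y| ∂μ := by
  rw [← integral_const_mul M, ← Real.norm_eq_abs]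
  refine norm_integral_le_of_norm_le (hφ.abs.const_mul M) (ae_of_all _ fun y => ?_)
  rw [Real.norm_eq_abs, abs_mul]
  exact mul_le_mul_of_nonneg_right (hKM x y) (abs_nonneg _)

theorem aestronglyMeasurable_integral_kernel_mul [SFinite μ]
    (hK : Measurable fun p : α × α => K p.1 p.2) (hφ : AEStronglyMeasurable φ μ) :
    AEStronglyMeasurable (fun x => ∫ y, K x y * φ y ∂μ) μ :=
  (hK.aestronglyMeasurable.mul hφ.comp_snd :
    AEStronglyMeasurable (fun p : α × α => K p.1 p.2 * φ p.2) (μ.prod μ)).integral_prod_right'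

theorem integrable_mul_integral_kernel_mul [SFinite μ]
    (hK : Measurable fun p : α × α => K p.1 p.2) (hKM : ∀ x y, |K x y| ≤ M)
    (hφ : Integrable φ μ) :
    Integrable (fun x => φ x * ∫ y, K x y * φ y ∂μ) μ :=
  hφ.mul_bdd (aestronglyMeasurable_integral_kernel_mul hK hφ.1)
    (ae_of_all _ fun x => abs_integral_kernel_mul_le hKM hφ x)

theorem integral_kernel_mul_mul (x : α) :
    ∫ y, K x y * φ x * φ y ∂μ = φ x * ∫ y, K x y * φ y ∂μ := by
  rw [← integral_const_mul]
  congr 1 with y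
  ring

theorem integral_integral_kernel_le [IsFiniteMeasure μ]
    (hK : Measurable fun p : α × α => K p.1 p.2) (hKM : ∀ x y, |K x y| ≤ M)
    (hφ : MemLp φ 2 μ) :
    ∫ x, ∫ y, K x y * φ x * φ y ∂μ ∂μ ≤ M * μ.real univ * ∫ x, φ x ^ 2 ∂μ := by
  have hφ1 := hφ.integrable one_le_two
  have hφ2 := hφ.integrable_sq
  set S := ∫ x, φ x ^ 2 ∂μ
  set V := μ.real univ
  have hinner : ∀ x, ∫ y, K x y * φ x * φ y ∂μ ≤ M / 2 * (φ x ^ 2 * V + S) := fun x => by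
    calc ∫ y, K x y * φ x * φ y ∂μ ≤ ∫ y, M / 2 * (φ x ^ 2 + φ y ^ 2) ∂μ :=
          integral_mono (((integrable_kernel_mul hK hKM hφ1 x).const_mul (φ x)).congr
              (ae_of_all _ fun y => by ring))
            (((integrable_const _).add hφ2).const_mul _)
            fun y => mul_mul_le_of_abs_le (hKM x y) _ _
      _ = M / 2 * (φ x ^ 2 * V + S) := by
          rw [integral_const_mul, integral_add (integrable_const _) hφ2, integral_const,
            smul_eq_mul, mul_comm V]
  calc ∫ x, ∫ y, K x y * φ x * φ y ∂μ ∂μ ≤ ∫ x, M / 2 * (φ x ^ 2 * V + S) ∂μ :=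
        integral_mono (by simpa only [integral_kernel_mul_mul] using
            integrable_mul_integral_kernel_mul hK hKM hφ1)
          (((hφ2.mul_const V).add (integrable_const _)).const_mul _) hinner
    _ = M * V * S := by
        rw [integral_const_mul, integral_add (hφ2.mul_const V) (integrable_const _),
          integral_mul_const, integral_const, smul_eq_mul]
        ring

theorem integral_mul_sq_le (ha : AEStronglyMeasurable a μ) (haC : ∀ᵐ x ∂μ, |a x| ≤ C)
    (hφ : MemLp φ 2 μ) :
    ∫ x, a x * φ x ^ 2 ∂μ ≤ C * ∫ x, φ x ^ 2 ∂μ := by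
  rw [← integral_const_mul]
  refine integral_mono_ae (hφ.integrable_sq.bdd_mul ha haC) (hφ.integrable_sq.const_mul C) ?_
  filter_upwards [haC] with x hx
  exact mul_le_mul_of_nonneg_right ((le_abs_self _).trans hx) (sq_nonneg _)

theorem neg_le_rayleigh_quotient [IsFiniteMeasure μ]
    (hK : Measurable fun p : α × α => K p.1 p.2) (hKM : ∀ x y, |K x y| ≤ M)
    (ha : AEStronglyMeasurable a μ) (haC : ∀ᵐ x ∂μ, |a x| ≤ C)
    (hφ : MemLp φ 2 μ) (hS : 0 < ∫ x, φ x ^ 2 ∂μ) :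
    -(M * μ.real univ + C) ≤
      (-(∫ x, ∫ y, K x y * φ x * φ y ∂μ ∂μ) - ∫ x, a x * φ x ^ 2 ∂μ) / ∫ x, φ x ^ 2 ∂μ := by
  rw [le_div_iff₀ hS]
  linarith [integral_integral_kernel_le hK hKM hφ, integral_mul_sq_le ha haC hφ]

theorem rayleigh_quotient_le_of_supersolution [IsFiniteMeasure μ]
    (hK : Measurable fun p : α × α => K p.1 p.2) (hKM : ∀ x y, |K x y| ≤ M)
    (ha : AEStronglyMeasurable a μ) (haC : ∀ᵐ x ∂μ, |a x| ≤ C) {l : ℝ} {ψ : α → ℝ}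
    (hψ : MemLp ψ 2 μ) (hψ0 : ∀ᵐ x ∂μ, 0 ≤ ψ x)
    (hsuper : ∀ᵐ x ∂μ, 0 ≤ ∫ y, K x y * ψ y ∂μ + (a x + l) * ψ x)
    (hS : 0 < ∫ x, ψ x ^ 2 ∂μ) :
    (-(∫ x, ∫ y, K x y * ψ x * ψ y ∂μ ∂μ) - ∫ x, a x * ψ x ^ 2 ∂μ) / ∫ x, ψ x ^ 2 ∂μ ≤ l := by
  have hψ2 := hψ.integrable_sq
  have hψ1 := hψ.integrable one_le_two
  have key : 0 ≤ ∫ x, (ψ x * ∫ y, K x y * ψ y ∂μ + a x * ψ x ^ 2 + l * ψ x ^ 2) ∂μ := by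
    refine integral_nonneg_of_ae ?_
    filter_upwards [hψ0, hsuper] with x hx0 hx
    exact (mul_nonneg hx0 hx).trans_eq (by ring)
  rw [integral_add (f := fun x => ψ x * ∫ y, K x y * ψ y ∂μ + a x * ψ x ^ 2)
      ((integrable_mul_integral_kernel_mul hK hKM hψ1).add (hψ2.bdd_mul ha haC))
      (hψ2.const_mul l),
    integral_add (integrable_mul_integral_kernel_mul hK hKM hψ1) (hψ2.bdd_mul ha haC),
    integral_const_mul] at key
  simp only [integral_kernel_mul_mul]
  rw [div_le_iff₀ hS]
  linarith

end KernelOperator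

theorem bddBelow_lamVSet {N : ℕ} {Ω : Set (EuclideanSpace ℝ (Fin N))}
    {K : EuclideanSpace ℝ (Fin N) → EuclideanSpace ℝ (Fin N) → ℝ}
    {a : EuclideanSpace ℝ (Fin N) → ℝ} {M C : ℝ} (hΩ : volume Ω ≠ ⊤)
    (hK : Measurable fun p : EuclideanSpace ℝ (Fin N) × EuclideanSpace ℝ (Fin N) => K p.1 p.2)
    (hKM : ∀ x y, |K x y| ≤ M) (ha : AEStronglyMeasurable a (volume.restrict Ω))
    (haC : ∀ᵐ x ∂volume.restrict Ω, |a x| ≤ C) :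
    BddBelow (lamVSet N Ω K a) := by
  have : IsFiniteMeasure (volume.restrict Ω) := isFiniteMeasure_restrict.2 hΩ
  refine ⟨-(M * (volume.restrict Ω).real univ + C), ?_⟩
  rintro _ ⟨φ, hφ, hS, rfl⟩
  exact KernelOperator.neg_le_rayleigh_quotient hK hKM ha haC hφ
    ((integral_nonneg fun _ => sq_nonneg _).lt_of_ne' hS)

theorem stmt5_general (N : ℕ)
    (Ω : Set (EuclideanSpace ℝ (Fin N)))
    (K : EuclideanSpace ℝ (Fin N) → EuclideanSpace ℝ (Fin N) → ℝ)
    (a : EuclideanSpace ℝ (Fin N) → ℝ)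
    (hΩo : IsOpen Ω)
    (hΩb : Bornology.IsBounded Ω)
    (hK0 : ∀ x y, 0 ≤ K x y)
    (hKmeas : Measurable (fun p : EuclideanSpace ℝ (Fin N) × EuclideanSpace ℝ (Fin N) => K p.1 p.2))
    (hKB : ∃ M, ∀ x y, K x y ≤ M)
    (hac : ContinuousOn a Ω) (haB : ∃ M, ∀ x ∈ Ω, |a x| ≤ M)
    (l : ℝ)
    (ψ : EuclideanSpace ℝ (Fin N) → ℝ)
    (hψc : ContinuousOn ψ Ω)
    (hψB : ∃ M, ∀ x ∈ Ω, |ψ x| ≤ M)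
    (hψ0 : ∀ x ∈ Ω, 0 ≤ ψ x)
    (hψne : ∃ x ∈ Ω, 0 < ψ x)
    (hψ : ∀ x ∈ Ω, 0 ≤ (∫ y in Ω, K x y * ψ y) + (a x + l) * ψ x) :
    sInf (lamVSet N Ω K a) ≤ l := by
  obtain ⟨MK, hMK⟩ := hKB
  obtain ⟨Ma, hMa⟩ := haB
  obtain ⟨Mψ, hMψ⟩ := hψB
  obtain ⟨x₀, hx₀, hψx₀⟩ := hψne
  have hΩm := hΩo.measurableSet
  have hΩfin := (hΩb.measure_lt_top (μ := volume)).ne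
  have : IsFiniteMeasure (volume.restrict Ω) := isFiniteMeasure_restrict.2 hΩfin
  have hKM : ∀ x y, |K x y| ≤ MK := fun x y => (abs_of_nonneg (hK0 x y)).trans_le (hMK x y)
  have ha : AEStronglyMeasurable a (volume.restrict Ω) := hac.aestronglyMeasurable hΩm
  have haC : ∀ᵐ x ∂volume.restrict Ω, |a x| ≤ Ma := ae_restrict_of_forall_mem hΩm hMa
  have hψL2 : MemLp ψ 2 (volume.restrict Ω) :=
    .of_bound (hψc.aestronglyMeasurable hΩm) Mψ (ae_restrict_of_forall_mem hΩm hMψ)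
  have hS := setIntegral_sq_pos_of_continuousOn hΩo hψc hψL2.integrable_sq hx₀ hψx₀.ne'
  exact csInf_le_of_le (bddBelow_lamVSet hΩfin hKmeas hKM ha haC) ⟨ψ, hψL2, hS.ne', rfl⟩
    (KernelOperator.rayleigh_quotient_le_of_supersolution hKmeas hKM ha haC hψL2
      (ae_restrict_of_forall_mem hΩm hψ0) (ae_restrict_of_forall_mem hΩm hψ) hS)

/-- If a nonnegative nontrivial bounded continuous `ψ` satisfies
`L_Ω ψ + (a + λ)ψ ≥ 0` in the bounded domain `Ω`, then `λ_v(L_Ω + a) ≤ λ`;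
consequently `λ_v(L_Ω + a) ≤ λ_p'(L_Ω + a)`. -/
theorem stmt5 (N : ℕ)
    (Ω : Set (EuclideanSpace ℝ (Fin N)))
    (K : EuclideanSpace ℝ (Fin N) → EuclideanSpace ℝ (Fin N) → ℝ)
    (a : EuclideanSpace ℝ (Fin N) → ℝ)
    (hΩo : IsOpen Ω) (hΩc : IsConnected Ω) (hΩne : Ω.Nonempty)
    (hΩb : Bornology.IsBounded Ω)
    (hK0 : ∀ x y, 0 ≤ K x y)
    (hKsym : ∀ x y, K x y = K y x)
    (hKmeas : Measurable (fun p : EuclideanSpace ℝ (Fin N) × EuclideanSpace ℝ (Fin N) => K p.1 p.2))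
    (hKB : ∃ M, ∀ x y, K x y ≤ M)
    (hac : ContinuousOn a Ω) (haB : ∃ M, ∀ x ∈ Ω, |a x| ≤ M)
    (l : ℝ)
    (ψ : EuclideanSpace ℝ (Fin N) → ℝ)
    (hψc : ContinuousOn ψ Ω)
    (hψB : ∃ M, ∀ x ∈ Ω, |ψ x| ≤ M)
    (hψ0 : ∀ x ∈ Ω, 0 ≤ ψ x)
    (hψne : ∃ x ∈ Ω, 0 < ψ x)
    (hψ : ∀ x ∈ Ω, 0 ≤ (∫ y in Ω, K x y * ψ y) + (a x + l) * ψ x) :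
    sInf (lamVSet N Ω K a) ≤ l :=
  stmt5_general N Ω K a hΩo hΩb hK0 hKmeas hKB hac haB l ψ hψc hψB hψ0 hψne hψ
end
end

section
/- Let J ∈ C_c(ℝ) be a probability density with compact support such that ∫_ℝ J(z) z dz > 0, and define (L_ℝ φ)(x) = ∫_ℝ J(x−y)φ(y) dy. Then λ_p'(L_ℝ) ≤ −1 < −min_{λ>0} ∫_ℝ J(z) e^{−λz} dz ≤ λ_p(L_ℝ). In particular λ_p'(L_ℝ) < λ_p(L_ℝ), so the two principal eigenvalue notions differ for the pure convolution operator on ℝ. -/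
/-!
Testing `L_ℝ` on `φ ≡ 1` gives `L_ℝ 1 = 1`, so `-1` is admissible for `λ_p'`, and comparing a
bounded `φ` with its supremum shows nothing below `-1` is. Testing on `φ(x) = e^{λx}` gives
`L_ℝ φ = (∫ J(z) e^{-λz} dz) φ`, so `-∫ J(z) e^{-λz} dz` is admissible for `λ_p`. Finally
`λ ↦ ∫ J(z) e^{-λz} dz` equals `1` at `0` with slope `-∫ J(z) z dz < 0`; the second-order bound
`e^t ≤ 1 + t + t²` for `|t| ≤ 1` makes this quantitative, so the infimum over `λ > 0` is `< 1`.
-/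

open MeasureTheory Filter Set
open scoped Topology

noncomputable section

/-- Admissible set for `λ_p(L_ℝ)`: `λ` such that `L_ℝ φ + λφ ≤ 0` for some positive
continuous `φ`, where `(L_ℝ φ)(x) = ∫_ℝ J(x−y)φ(y) dy`. -/
def lamPSet (J : ℝ → ℝ) : Set ℝ :=
  {l | ∃ φ : ℝ → ℝ, Continuous φ ∧ (∀ x, 0 < φ x) ∧
    ∀ x, (∫ y, J (x - y) * φ y) + l * φ x ≤ 0}

/-- Admissible set for `λ_p'(L_ℝ)`: `λ` such that `L_ℝ φ + λφ ≥ 0` for some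
nonnegative, nontrivial, bounded continuous `φ`. -/
def lamP'Set (J : ℝ → ℝ) : Set ℝ :=
  {l | ∃ φ : ℝ → ℝ, Continuous φ ∧ (∃ M, ∀ x, |φ x| ≤ M) ∧ (∀ x, 0 ≤ φ x) ∧
    (∃ x, φ x ≠ 0) ∧ ∀ x, 0 ≤ (∫ y, J (x - y) * φ y) + l * φ x}

variable {J : ℝ → ℝ}

lemma integral_comp_sub_mul_const (hJ1 : ∫ z, J z = 1) (x c : ℝ) :
    ∫ y, J (x - y) * c = c := by
  rw [integral_mul_const, integral_sub_left_eq_self J volume x, hJ1, one_mul]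

theorem isLeast_lamP'Set (hJi : Integrable J) (hJ0 : ∀ z, 0 ≤ J z) (hJ1 : ∫ z, J z = 1) :
    IsLeast (lamP'Set J) (-1) := by
  refine ⟨⟨fun _ => 1, continuous_const, ⟨1, fun _ => by norm_num⟩, fun _ => zero_le_one,
    ⟨0, one_ne_zero⟩, fun x => by rw [integral_comp_sub_mul_const hJ1]; norm_num⟩, ?_⟩
  rintro l ⟨φ, -, ⟨M, hM⟩, hφ0, ⟨x₀, hx₀⟩, hsuper⟩
  by_contra! hl
  have hbdd : BddAbove (range φ) := ⟨M, by rintro _ ⟨x, rfl⟩; exact (abs_le.1 (hM x)).2⟩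
  set S := sSup (range φ)
  have hle : ∀ x, φ x ≤ S := fun x => le_csSup hbdd ⟨x, rfl⟩
  have hS : 0 < S := ((hφ0 x₀).lt_of_ne' hx₀).trans_le (hle x₀)
  have hconv_le : ∀ x, ∫ y, J (x - y) * φ y ≤ S := fun x =>
    calc ∫ y, J (x - y) * φ y ≤ ∫ y, J (x - y) * S :=
          integral_mono_of_nonneg (.of_forall fun y => mul_nonneg (hJ0 _) (hφ0 y))
            ((hJi.comp_sub_left x).mul_const S)
            (.of_forall fun y => mul_le_mul_of_nonneg_left (hle y) (hJ0 _))
      _ = S := integral_comp_sub_mul_const hJ1 x S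
  -- `-l φ ≤ L_ℝ φ ≤ S` with `-l > 1` would push `sup φ` below itself
  have hφ_le : ∀ x, φ x ≤ S / -l := fun x => by
    rw [le_div_iff₀ (by linarith)]
    nlinarith [hsuper x, hconv_le x]
  have hS_le : S ≤ S / -l := csSup_le (range_nonempty φ) (by rintro _ ⟨x, rfl⟩; exact hφ_le x)
  rw [le_div_iff₀ (by linarith)] at hS_le
  nlinarith

lemma nonpos_of_mem_lamPSet (hJ0 : ∀ z, 0 ≤ J z) {l : ℝ} (hl : l ∈ lamPSet J) : l ≤ 0 := by
  obtain ⟨φ, -, hφ0, hsub⟩ := hl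
  have hconv : 0 ≤ ∫ y, J (0 - y) * φ y :=
    integral_nonneg fun y => mul_nonneg (hJ0 _) (hφ0 y).le
  nlinarith [hsub 0, hφ0 0]

lemma integral_comp_sub_mul_exp (J : ℝ → ℝ) (l x : ℝ) :
    ∫ y, J (x - y) * Real.exp (l * y) = Real.exp (l * x) * ∫ z, J z * Real.exp (-(l * z)) := by
  rw [← integral_const_mul,
    ← integral_sub_left_eq_self (fun z => Real.exp (l * x) * (J z * Real.exp (-(l * z)))) volume x]
  congr 1 with y
  rw [mul_left_comm, ← Real.exp_add]
  ring_nf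

lemma neg_integral_mul_exp_mem_lamPSet (J : ℝ → ℝ) (l : ℝ) :
    -∫ z, J z * Real.exp (-(l * z)) ∈ lamPSet J :=
  ⟨fun x => Real.exp (l * x), by fun_prop, fun _ => Real.exp_pos _,
    fun x => le_of_eq (by rw [integral_comp_sub_mul_exp]; ring)⟩

theorem neg_sInf_image_le_sSup_lamPSet (hJ0 : ∀ z, 0 ≤ J z) {s : Set ℝ} (hs : s.Nonempty) :
    -sInf ((fun l : ℝ => ∫ z, J z * Real.exp (-(l * z))) '' s) ≤ sSup (lamPSet J) := by
  have hbdd : BddAbove (lamPSet J) := ⟨0, fun _ => nonpos_of_mem_lamPSet hJ0⟩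
  rw [neg_le]
  refine le_csInf (hs.image _) ?_
  rintro _ ⟨l, -, rfl⟩
  exact neg_le.1 (le_csSup hbdd (neg_integral_mul_exp_mem_lamPSet J l))

theorem integral_mul_exp_neg_le (hJc : Continuous J) (hJs : HasCompactSupport J)
    (hJ0 : ∀ z, 0 ≤ J z) (hJ1 : ∫ z, J z = 1) {R : ℝ} (hR : ∀ z, J z ≠ 0 → |z| ≤ R)
    {l : ℝ} (hl : 0 ≤ l) (hlR : l * R ≤ 1) :
    ∫ z, J z * Real.exp (-(l * z)) ≤ 1 - l * (∫ z, J z * z) + l ^ 2 * R ^ 2 := by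
  have hint : ∀ f : ℝ → ℝ, Continuous f → Integrable fun z => J z * f z := fun f hf =>
    (hJc.mul hf).integrable_of_hasCompactSupport hJs.mul_right
  have hpt : ∀ z, J z * Real.exp (-(l * z)) ≤ J z * (1 + l ^ 2 * R ^ 2) - l * (J z * z) := by
    intro z
    by_cases hz : J z = 0
    · simp [hz]
    have hzR := hR z hz
    have hexp := Real.abs_exp_sub_one_sub_id_le (x := -(l * z)) (by
      rw [abs_neg, abs_mul, abs_of_nonneg hl]
      nlinarith)
    have hsq : (l * z) ^ 2 ≤ l ^ 2 * R ^ 2 := by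
      rw [mul_pow, ← sq_abs z]
      gcongr
    nlinarith [(abs_le.1 hexp).2, hJ0 z]
  calc ∫ z, J z * Real.exp (-(l * z))
      ≤ ∫ z, (J z * (1 + l ^ 2 * R ^ 2) - l * (J z * z)) :=
        integral_mono (hint _ (by fun_prop))
          ((hint _ continuous_const).sub ((hint (fun z => z) continuous_id).const_mul l)) hpt
    _ = 1 - l * (∫ z, J z * z) + l ^ 2 * R ^ 2 := by
        rw [integral_sub (hint _ continuous_const) ((hint (fun z => z) continuous_id).const_mul l),
          integral_mul_const, integral_const_mul, hJ1]
        ring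

theorem exists_pos_integral_mul_exp_neg_lt_one (hJc : Continuous J) (hJs : HasCompactSupport J)
    (hJ0 : ∀ z, 0 ≤ J z) (hJ1 : ∫ z, J z = 1) (hJm : 0 < ∫ z, J z * z) :
    ∃ l > 0, ∫ z, J z * Real.exp (-(l * z)) < 1 := by
  obtain ⟨R, hR0, hRJ⟩ := hJs.exists_pos_le_norm
  have hR : ∀ z, J z ≠ 0 → |z| ≤ R := fun z hz => by
    by_contra! h
    exact hz (hRJ z h.le)
  set a := ∫ z, J z * z
  -- `l ≤ a / (2R²)` makes the quadratic error at most half of the linear gain `l a`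
  set l := min (1 / R) (a / (2 * R ^ 2))
  have hl : 0 < l := lt_min (by positivity) (by positivity)
  have hlR : l * R ≤ 1 := (le_div_iff₀ hR0).1 (min_le_left _ _)
  have hlR2 : l * (2 * R ^ 2) ≤ a := (le_div_iff₀ (by positivity)).1 (min_le_right _ _)
  refine ⟨l, hl, (integral_mul_exp_neg_le hJc hJs hJ0 hJ1 hR hl.le hlR).trans_lt ?_⟩
  nlinarith [mul_le_mul_of_nonneg_left hlR2 hl.le, mul_pos hl hJm]

/-- For a compactly supported probability density `J` on `ℝ` with
`∫ J(z) z dz > 0`, one has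
`λ_p'(L_ℝ) ≤ −1 < −min_{λ>0} ∫ J(z)e^{−λz} dz ≤ λ_p(L_ℝ)`; in particular
`λ_p'(L_ℝ) < λ_p(L_ℝ)`. -/
theorem stmt19 (J : ℝ → ℝ)
    (hJc : Continuous J) (hJs : HasCompactSupport J)
    (hJ0 : ∀ z, 0 ≤ J z) (hJ1 : ∫ z, J z = 1)
    (hJm : 0 < ∫ z, J z * z) :
    sInf (lamP'Set J) ≤ -1 ∧
    (-1 : ℝ) < -sInf ((fun l : ℝ => ∫ z, J z * Real.exp (-(l * z))) '' Set.Ioi 0) ∧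
    -sInf ((fun l : ℝ => ∫ z, J z * Real.exp (-(l * z))) '' Set.Ioi 0) ≤ sSup (lamPSet J) ∧
    sInf (lamP'Set J) < sSup (lamPSet J) := by
  have hP' : sInf (lamP'Set J) = -1 :=
    (isLeast_lamP'Set (hJc.integrable_of_hasCompactSupport hJs) hJ0 hJ1).csInf_eq
  obtain ⟨l₀, hl₀, hlt⟩ := exists_pos_integral_mul_exp_neg_lt_one hJc hJs hJ0 hJ1 hJm
  have hbdd : BddBelow ((fun l : ℝ => ∫ z, J z * Real.exp (-(l * z))) '' Ioi 0) := by
    refine ⟨0, ?_⟩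
    rintro _ ⟨l, -, rfl⟩
    exact integral_nonneg fun z => mul_nonneg (hJ0 z) (Real.exp_nonneg _)
  have hinf := (csInf_le hbdd ⟨l₀, hl₀, rfl⟩).trans_lt hlt
  have hP := neg_sInf_image_le_sSup_lamPSet hJ0 (nonempty_Ioi (a := (0 : ℝ)))
  exact ⟨hP'.le, by linarith, hP, by linarith⟩
end
end
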